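/- arXiv:2512.10466 — 5 statements merged into one kernel-verified Lean document; each statement's English description precedes it below -/
import Mathlib

section
/- Let N₀ and N₁ be two Hermitian norms on a finite-dimensional complex vector space V, and let e₁,…,e_v be a basis of V orthogonal for both N₀ and N₁. Define the rooftop norm N₀∨N₁ as the Hermitian norm for which e₁,…,e_v is orthogonal and ‖e_i‖_{N₀∨N₁} = max(‖e_i‖_{N₀}, ‖e_i‖_{N₁}). Then (1/√2)·(N₀∨N₁) ≤ max(N₀, N₁) ≤ N₀∨N₁, where max(N₀,N₁) denotes the pointwise maximum of the two norms. -/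
open scoped BigOperators

/-- The Hermitian norm on `V` for which the basis `b` is orthogonal with `‖b j‖ = c j`. -/
noncomputable def hermNorm {V : Type*} [AddCommGroup V] [Module ℂ V] {v : ℕ}
    (b : Module.Basis (Fin v) ℂ V) (c : Fin v → ℝ) (w : V) : ℝ :=
  Real.sqrt (∑ j, (c j) ^ 2 * ‖b.repr w j‖ ^ 2)

/-!
Write `a j = ‖b.repr w j‖²`; the three squared norms are `∑ c j² a j` for the three weight
families. Pointwise `c₀ j ≤ max (c₀ j) (c₁ j)` gives the upper bound, and
`max (c₀ j) (c₁ j)² ≤ c₀ j² + c₁ j²` gives `(N₀ ∨ N₁)² ≤ N₀² + N₁² ≤ 2 max (N₀, N₁)²`.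
-/

lemma max_sq_le_sq_add_sq (x y : ℝ) : max x y ^ 2 ≤ x ^ 2 + y ^ 2 := by
  rcases max_choice x y with h | h <;> rw [h] <;> nlinarith [sq_nonneg x, sq_nonneg y]

lemma le_sqrt_two_mul_max_of_sq_le {x y z : ℝ} (hx : 0 ≤ x) (hy : 0 ≤ y)
    (h : z ^ 2 ≤ x ^ 2 + y ^ 2) : z ≤ Real.sqrt 2 * max x y := by
  have hsum : x ^ 2 + y ^ 2 ≤ 2 * max x y ^ 2 := by
    nlinarith [pow_le_pow_left₀ hx (le_max_left x y) 2, pow_le_pow_left₀ hy (le_max_right x y) 2]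
  calc z ≤ Real.sqrt (x ^ 2 + y ^ 2) := Real.le_sqrt_of_sq_le h
    _ ≤ Real.sqrt (2 * max x y ^ 2) := Real.sqrt_le_sqrt hsum
    _ = Real.sqrt 2 * max x y := by
      rw [Real.sqrt_mul zero_le_two, Real.sqrt_sq (hx.trans (le_max_left x y))]

section hermNorm

variable {V : Type*} [AddCommGroup V] [Module ℂ V] {v : ℕ} (b : Module.Basis (Fin v) ℂ V)

lemma hermNorm_nonneg (c : Fin v → ℝ) (w : V) : 0 ≤ hermNorm b c w :=
  Real.sqrt_nonneg _

lemma hermNorm_sq (c : Fin v → ℝ) (w : V) :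
    hermNorm b c w ^ 2 = ∑ j, c j ^ 2 * ‖b.repr w j‖ ^ 2 :=
  Real.sq_sqrt (Finset.sum_nonneg fun _ _ => by positivity)

lemma hermNorm_le_hermNorm {c d : Fin v → ℝ} (h : ∀ j, c j ^ 2 ≤ d j ^ 2) (w : V) :
    hermNorm b c w ≤ hermNorm b d w :=
  Real.sqrt_le_sqrt <| Finset.sum_le_sum fun j _ =>
    mul_le_mul_of_nonneg_right (h j) (sq_nonneg _)

lemma hermNorm_sq_le_add {c₀ c₁ d : Fin v → ℝ} (h : ∀ j, d j ^ 2 ≤ c₀ j ^ 2 + c₁ j ^ 2)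
    (w : V) : hermNorm b d w ^ 2 ≤ hermNorm b c₀ w ^ 2 + hermNorm b c₁ w ^ 2 := by
  simp only [hermNorm_sq, ← Finset.sum_add_distrib, ← add_mul]
  exact Finset.sum_le_sum fun j _ => mul_le_mul_of_nonneg_right (h j) (sq_nonneg _)

end hermNorm

/-- For two Hermitian norms `N₀`, `N₁` with a simultaneously orthogonal basis, and the
rooftop Hermitian norm `N₀ ∨ N₁`, one has
`(1/√2)·(N₀ ∨ N₁) ≤ max (N₀, N₁) ≤ N₀ ∨ N₁` pointwise. -/
theorem rooftop_norm_compare {V : Type*} [AddCommGroup V] [Module ℂ V]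
    (v : ℕ) (b : Module.Basis (Fin v) ℂ V) (c₀ c₁ : Fin v → ℝ)
    (h₀ : ∀ j, 0 < c₀ j) (h₁ : ∀ j, 0 < c₁ j) (w : V) :
    (1 / Real.sqrt 2) * hermNorm b (fun j => max (c₀ j) (c₁ j)) w ≤
        max (hermNorm b c₀ w) (hermNorm b c₁ w) ∧
      max (hermNorm b c₀ w) (hermNorm b c₁ w) ≤
        hermNorm b (fun j => max (c₀ j) (c₁ j)) w := by
  have rooftop_sq : hermNorm b (fun j => max (c₀ j) (c₁ j)) w ^ 2 ≤
      hermNorm b c₀ w ^ 2 + hermNorm b c₁ w ^ 2 :=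
    hermNorm_sq_le_add b (fun j => max_sq_le_sq_add_sq (c₀ j) (c₁ j)) w
  refine ⟨?_, max_le ?_ ?_⟩
  · rw [one_div_mul_eq_div, div_le_iff₀' (Real.sqrt_pos.mpr two_pos)]
    exact le_sqrt_two_mul_max_of_sq_le (hermNorm_nonneg b c₀ w) (hermNorm_nonneg b c₁ w)
      rooftop_sq
  · exact hermNorm_le_hermNorm b (fun j => pow_le_pow_left₀ (h₀ j).le (le_max_left _ _) 2) w
  · exact hermNorm_le_hermNorm b (fun j => pow_le_pow_left₀ (h₁ j).le (le_max_right _ _) 2) w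
end

section
/- Let N₀, N₁, N₂ be norms on a finite-dimensional complex vector space V of dimension v, and suppose there is C > 0 with e^{-C}·N₁ ≤ N₂ ≤ e^{C}·N₁ pointwise. Then for every p ∈ [1,∞), |d_p(N₀,N₁) − d_p(N₀,N₂)| ≤ C, where d_p(N,N') := ((1/v)·∑_{j=1}^v |λ_j(N,N')|^p)^{1/p} and λ_j is the logarithmic relative spectrum. -/
open scoped BigOperators

/-- A (complex, Hermitian-homogeneous) norm on a complex vector space, given as a function. -/
structure IsCNorm {V : Type*} [AddCommGroup V] [Module ℂ V] (N : V → ℝ) : Prop where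
  nonneg : ∀ w, 0 ≤ N w
  eq_zero : ∀ w, N w = 0 → w = 0
  smul : ∀ (c : ℂ) (w : V), N (c • w) = ‖c‖ * N w
  triangle : ∀ w w', N (w + w') ≤ N w + N w'

/-- The `j`-th logarithmic relative spectrum of the norm `N` with respect to `N'`:
`λ_j(N,N') = sup_{W ⊆ V, dim W = j} inf_{w ∈ W \ {0}} log (N' w / N w)`. -/
noncomputable def logSpec {V : Type*} [AddCommGroup V] [Module ℂ V]
    (N N' : V → ℝ) (j : ℕ) : ℝ :=
  sSup {r : ℝ | ∃ W : Submodule ℂ V, Module.finrank ℂ ↥W = j ∧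
    r = sInf {s : ℝ | ∃ w : V, w ∈ W ∧ w ≠ 0 ∧ s = Real.log (N' w / N w)}}

/-- The quasi-distance `d_p(N,N') = ((1/v) ∑_{j=1}^v |λ_j(N,N')|^p)^(1/p)`. -/
noncomputable def dp {V : Type*} [AddCommGroup V] [Module ℂ V]
    (p : ℝ) (v : ℕ) (N N' : V → ℝ) : ℝ :=
  ((∑ j ∈ Finset.Icc 1 v, |logSpec N N' j| ^ p) / (v : ℝ)) ^ (1 / p)

/-!
At every nonzero `w` the log-ratios `log (N₁ w / N₀ w)` and `log (N₂ w / N₀ w)` differ by at most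
`C`. Infima and suprema of two families of reals that are pointwise `C`-close are again `C`-close,
so `|λ_j(N₀,N₁) - λ_j(N₀,N₂)| ≤ C` for every `j`. Finally `d_p` is a normalized `ℓ^p` norm of the
vector `(λ_j)_j`, which by Minkowski's inequality is `1`-Lipschitz for the sup distance.
-/

open Real

lemma IsCNorm.pos {V : Type*} [AddCommGroup V] [Module ℂ V] {N : V → ℝ} (hN : IsCNorm N)
    {w : V} (hw : w ≠ 0) : 0 < N w :=
  (hN.nonneg w).lt_of_ne fun h => hw (hN.eq_zero w h.symm)

lemma abs_log_div_sub_log_div_le {x y z C : ℝ} (hx : 0 < x) (hz : 0 < z)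
    (hlow : exp (-C) * x ≤ y) (hup : y ≤ exp C * x) :
    |log (x / z) - log (y / z)| ≤ C := by
  have hy : 0 < y := (by positivity : 0 < exp (-C) * x).trans_le hlow
  have hle : log y ≤ C + log x := by
    simpa [log_mul (exp_ne_zero C) hx.ne'] using log_le_log hy hup
  have hge : -C + log x ≤ log y := by
    simpa [log_mul (exp_ne_zero (-C)) hx.ne'] using log_le_log (by positivity) hlow
  rw [log_div hx.ne' hz.ne', log_div hy.ne' hz.ne', abs_le]
  constructor <;> linarith

section HausdorffClose

variable {A B : Set ℝ} {C : ℝ}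

lemma bddBelow_of_forall_exists_abs_sub_le (hB : BddBelow B)
    (h : ∀ a ∈ A, ∃ b ∈ B, |a - b| ≤ C) : BddBelow A := by
  obtain ⟨m, hm⟩ := hB
  refine ⟨m - C, fun a ha => ?_⟩
  obtain ⟨b, hb, hab⟩ := h a ha
  linarith [hm hb, (abs_le.1 hab).1]

lemma csInf_le_csInf_add_of_forall_exists_abs_sub_le (hA : BddBelow A) (hB : B.Nonempty)
    (h : ∀ b ∈ B, ∃ a ∈ A, |b - a| ≤ C) : sInf A ≤ sInf B + C := by
  suffices sInf A - C ≤ sInf B by linarith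
  refine le_csInf hB fun b hb => ?_
  obtain ⟨a, ha, hba⟩ := h b hb
  linarith [csInf_le hA ha, (abs_le.1 hba).1]

-- No nonemptiness or boundedness is needed: the hypotheses make `A` and `B` degenerate together,
-- and then both `sInf`s are the junk value `0`.
lemma abs_sInf_sub_sInf_le (hC : 0 ≤ C) (hAB : ∀ a ∈ A, ∃ b ∈ B, |a - b| ≤ C)
    (hBA : ∀ b ∈ B, ∃ a ∈ A, |b - a| ≤ C) : |sInf A - sInf B| ≤ C := by
  by_cases hA : A.Nonempty ∧ BddBelow A
  · have hB : B.Nonempty ∧ BddBelow B := by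
      obtain ⟨a, ha⟩ := hA.1
      obtain ⟨b, hb, -⟩ := hAB a ha
      exact ⟨⟨b, hb⟩, bddBelow_of_forall_exists_abs_sub_le hA.2 hBA⟩
    rw [abs_sub_le_iff]
    constructor
    · linarith [csInf_le_csInf_add_of_forall_exists_abs_sub_le hA.2 hB.1 hBA]
    · linarith [csInf_le_csInf_add_of_forall_exists_abs_sub_le hB.2 hA.1 hAB]
  · have hB : ¬(B.Nonempty ∧ BddBelow B) := fun ⟨⟨b, hb⟩, hbdd⟩ => by
      obtain ⟨a, ha, -⟩ := hBA b hb
      exact hA ⟨⟨a, ha⟩, bddBelow_of_forall_exists_abs_sub_le hbdd hAB⟩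
    have hzero : ∀ s : Set ℝ, ¬(s.Nonempty ∧ BddBelow s) → sInf s = 0 := fun s hs => by
      rcases s.eq_empty_or_nonempty with rfl | hne
      · exact Real.sInf_empty
      · exact Real.sInf_of_not_bddBelow fun hbdd => hs ⟨hne, hbdd⟩
    simpa [hzero A hA, hzero B hB] using hC

lemma abs_sSup_sub_sSup_le (hC : 0 ≤ C) (hAB : ∀ a ∈ A, ∃ b ∈ B, |a - b| ≤ C)
    (hBA : ∀ b ∈ B, ∃ a ∈ A, |b - a| ≤ C) : |sSup A - sSup B| ≤ C := by
  have hneg : ∀ {X Y : Set ℝ}, (∀ x ∈ X, ∃ y ∈ Y, |x - y| ≤ C) →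
      ∀ x ∈ -X, ∃ y ∈ -Y, |x - y| ≤ C := fun h x hx => by
    obtain ⟨y, hy, hxy⟩ := h (-x) hx
    exact ⟨-y, Set.neg_mem_neg.2 hy, by rwa [show x - -y = -(-x - y) by ring, abs_neg]⟩
  have := abs_sInf_sub_sInf_le hC (hneg hAB) (hneg hBA)
  rwa [Real.sInf_neg, Real.sInf_neg, neg_sub_neg, abs_sub_comm] at this

end HausdorffClose

lemma abs_logSpec_sub_logSpec_le {V : Type*} [AddCommGroup V] [Module ℂ V]
    {N₀ N₁ N₂ : V → ℝ} {C : ℝ} (hC : 0 ≤ C)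
    (h : ∀ w, w ≠ 0 → |log (N₁ w / N₀ w) - log (N₂ w / N₀ w)| ≤ C) (j : ℕ) :
    |logSpec N₀ N₁ j - logSpec N₀ N₂ j| ≤ C := by
  have hinner : ∀ W : Submodule ℂ V,
      |sInf {s | ∃ w, w ∈ W ∧ w ≠ 0 ∧ s = log (N₁ w / N₀ w)} -
        sInf {s | ∃ w, w ∈ W ∧ w ≠ 0 ∧ s = log (N₂ w / N₀ w)}| ≤ C := fun W =>
    abs_sInf_sub_sInf_le hC
      (by rintro _ ⟨w, hw, hw0, rfl⟩; exact ⟨_, ⟨w, hw, hw0, rfl⟩, h w hw0⟩)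
      (by
        rintro _ ⟨w, hw, hw0, rfl⟩
        exact ⟨_, ⟨w, hw, hw0, rfl⟩, (abs_sub_comm _ _).trans_le (h w hw0)⟩)
  exact abs_sSup_sub_sSup_le hC
    (by rintro _ ⟨W, hW, rfl⟩; exact ⟨_, ⟨W, hW, rfl⟩, hinner W⟩)
    (by rintro _ ⟨W, hW, rfl⟩; exact ⟨_, ⟨W, hW, rfl⟩, (abs_sub_comm _ _).trans_le (hinner W)⟩)

section LpMean

variable {ι : Type*} (s : Finset ι)

noncomputable def lpMean (p : ℝ) (a : ι → ℝ) : ℝ :=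
  ((∑ i ∈ s, |a i| ^ p) / s.card) ^ (1 / p)

lemma lpMean_add_le {p : ℝ} (hp : 1 ≤ p) (a b : ι → ℝ) :
    lpMean s p (a + b) ≤ lpMean s p a + lpMean s p b := by
  have hsum : ∀ c : ι → ℝ, 0 ≤ ∑ i ∈ s, |c i| ^ p := fun c =>
    Finset.sum_nonneg fun i _ => rpow_nonneg (abs_nonneg _) _
  simp only [lpMean, div_rpow (hsum _) s.card.cast_nonneg, ← add_div, Pi.add_apply]
  exact div_le_div_of_nonneg_right (Lp_add_le s a b hp) (by positivity)

lemma lpMean_le_of_forall_abs_le {p : ℝ} (hp : 0 < p) {a : ι → ℝ} {C : ℝ} (hC : 0 ≤ C)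
    (h : ∀ i ∈ s, |a i| ≤ C) : lpMean s p a ≤ C := by
  have hsum : ∑ i ∈ s, |a i| ^ p ≤ C ^ p * s.card := by
    simpa [mul_comm] using Finset.sum_le_sum fun i hi =>
      rpow_le_rpow (abs_nonneg (a i)) (h i hi) hp.le
  calc lpMean s p a ≤ (C ^ p) ^ (1 / p) :=
        rpow_le_rpow (by positivity) (div_le_of_le_mul₀ (by positivity) (by positivity) hsum)
          (by positivity)
    _ = C := by rw [one_div, rpow_rpow_inv hC hp.ne']

lemma abs_lpMean_sub_lpMean_le {p : ℝ} (hp : 1 ≤ p) {a b : ι → ℝ} {C : ℝ} (hC : 0 ≤ C)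
    (h : ∀ i ∈ s, |a i - b i| ≤ C) : |lpMean s p a - lpMean s p b| ≤ C := by
  have hle : ∀ a b : ι → ℝ, (∀ i ∈ s, |a i - b i| ≤ C) → lpMean s p a ≤ lpMean s p b + C :=
    fun a b h => calc
      lpMean s p a = lpMean s p (b + (a - b)) := by rw [add_sub_cancel]
      _ ≤ lpMean s p b + lpMean s p (a - b) := lpMean_add_le s hp b (a - b)
      _ ≤ lpMean s p b + C := by
        gcongr; exact lpMean_le_of_forall_abs_le s (by linarith) hC h
  rw [abs_sub_le_iff]
  constructor
  · linarith [hle a b h]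
  · linarith [hle b a fun i hi => (abs_sub_comm _ _).trans_le (h i hi)]

end LpMean

lemma dp_eq_lpMean {V : Type*} [AddCommGroup V] [Module ℂ V] (p : ℝ) (v : ℕ) (N N' : V → ℝ) :
    dp p v N N' = lpMean (Finset.Icc 1 v) p (logSpec N N') := by
  simp [dp, lpMean]

theorem abs_dp_sub_dp_le_general {V : Type*} [AddCommGroup V] [Module ℂ V]
    (v : ℕ) (N₀ N₁ N₂ : V → ℝ) (h₀ : IsCNorm N₀) (h₁ : IsCNorm N₁)
    (C : ℝ) (hC : 0 < C)
    (hlow : ∀ w, Real.exp (-C) * N₁ w ≤ N₂ w) (hup : ∀ w, N₂ w ≤ Real.exp C * N₁ w)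
    (p : ℝ) (hp : 1 ≤ p) :
    |dp p v N₀ N₁ - dp p v N₀ N₂| ≤ C := by
  have hlog : ∀ w, w ≠ 0 → |log (N₁ w / N₀ w) - log (N₂ w / N₀ w)| ≤ C := fun w hw =>
    abs_log_div_sub_log_div_le (h₁.pos hw) (h₀.pos hw) (hlow w) (hup w)
  rw [dp_eq_lpMean, dp_eq_lpMean]
  exact abs_lpMean_sub_lpMean_le _ hp hC.le fun j _ => abs_logSpec_sub_logSpec_le hC.le hlog j

/-- If `e^{-C} N₁ ≤ N₂ ≤ e^C N₁` pointwise, then `|d_p(N₀,N₁) - d_p(N₀,N₂)| ≤ C`. -/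
theorem abs_dp_sub_dp_le {V : Type*} [AddCommGroup V] [Module ℂ V]
    [FiniteDimensional ℂ V] (v : ℕ) (hv : 1 ≤ v) (hdim : Module.finrank ℂ V = v)
    (N₀ N₁ N₂ : V → ℝ) (h₀ : IsCNorm N₀) (h₁ : IsCNorm N₁) (h₂ : IsCNorm N₂)
    (C : ℝ) (hC : 0 < C)
    (hlow : ∀ w, Real.exp (-C) * N₁ w ≤ N₂ w) (hup : ∀ w, N₂ w ≤ Real.exp C * N₁ w)
    (p : ℝ) (hp : 1 ≤ p) :
    |dp p v N₀ N₁ - dp p v N₀ N₂| ≤ C :=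
  abs_dp_sub_dp_le_general v N₀ N₁ N₂ h₀ h₁ C hC hlow hup p hp
end

section
/- Let V be a finite-dimensional complex vector space of dimension v, E ⊆ V a subspace of dimension e, and N₀, N₁ norms on V. Then for every i = 1,…,e, the logarithmic relative spectra satisfy the interlacing inequalities λ_i(N₀,N₁) ≥ λ_i(N₀|_E, N₁|_E) ≥ λ_{i+v−e}(N₀,N₁). -/
open scoped BigOperators

/-!
The restricted spectrum and the full one are both max-min values of the same function
`F w = log (N₁ w / N₀ w)`, over subspaces of `E` and of `V` respectively. A subspace of `E` is a
subspace of `V`, which gives the first inequality. For the second, a subspace `W ⊆ V` of dimension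
`i + v - e` meets `E` in dimension at least `i`, and the infimum of `F` only grows on the smaller
subspace. Equivalence of norms in finite dimension keeps `F` bounded on nonzero vectors, so all
the suprema and infima involved are taken over bounded nonempty sets.
-/

open Module

namespace IsCNorm

variable {V : Type*} [AddCommGroup V] [Module ℂ V] {N N₀ N₁ : V → ℝ}

lemma pos_of_ne_zero (h : IsCNorm N) {w : V} (hw : w ≠ 0) : 0 < N w :=
  (h.nonneg w).lt_of_ne fun h0 => hw (h.eq_zero w h0.symm)

lemma exists_bounds_of_linearEquiv [FiniteDimensional ℂ V] (h : IsCNorm N) {n : ℕ}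
    (φ : (Fin n → ℂ) ≃ₗ[ℂ] V) :
    ∃ C > 0, ∀ x : Fin n → ℂ, N (φ x) ≤ C * ‖x‖ ∧ ‖x‖ ≤ C * N (φ x) := by
  let : NormedAddCommGroup V := AddGroupNorm.toNormedAddCommGroup
    { toFun := N
      map_zero' := by simpa using h.smul 0 0
      add_le' := h.triangle
      neg' := fun w => by simpa using h.smul (-1) w
      eq_zero_of_map_eq_zero' := h.eq_zero }
  let : NormedSpace ℂ V := ⟨fun c w => (h.smul c w).le⟩
  let f : (Fin n → ℂ) →L[ℂ] V := ⟨φ.toLinearMap, φ.toLinearMap.continuous_of_finiteDimensional⟩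
  let g : V →L[ℂ] (Fin n → ℂ) :=
    ⟨φ.symm.toLinearMap, φ.symm.toLinearMap.continuous_of_finiteDimensional⟩
  refine ⟨max ‖f‖ ‖g‖ + 1, by positivity, fun x => ⟨?_, ?_⟩⟩
  · calc N (φ x) = ‖f x‖ := rfl
      _ ≤ ‖f‖ * ‖x‖ := f.le_opNorm x
      _ ≤ (max ‖f‖ ‖g‖ + 1) * ‖x‖ := by gcongr; linarith [le_max_left ‖f‖ ‖g‖]
  · calc ‖x‖ = ‖g (φ x)‖ := by simp [g]
      _ ≤ ‖g‖ * N (φ x) := g.le_opNorm _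
      _ ≤ (max ‖f‖ ‖g‖ + 1) * N (φ x) := by
          gcongr
          · exact h.nonneg _
          · linarith [le_max_right ‖f‖ ‖g‖]

lemma exists_le_mul [FiniteDimensional ℂ V] (h₀ : IsCNorm N₀) (h₁ : IsCNorm N₁) :
    ∃ C > 0, ∀ w, N₁ w ≤ C * N₀ w := by
  let φ := (finBasis ℂ V).equivFun.symm
  obtain ⟨C₀, hC₀, hN₀⟩ := h₀.exists_bounds_of_linearEquiv φ
  obtain ⟨C₁, hC₁, hN₁⟩ := h₁.exists_bounds_of_linearEquiv φ
  refine ⟨C₁ * C₀, by positivity, fun w => ?_⟩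
  obtain ⟨x, rfl⟩ := φ.surjective w
  calc N₁ (φ x) ≤ C₁ * ‖x‖ := (hN₁ x).1
    _ ≤ C₁ * (C₀ * N₀ (φ x)) := by gcongr; exact (hN₀ x).2
    _ = C₁ * C₀ * N₀ (φ x) := by ring

lemma exists_abs_log_div_le [FiniteDimensional ℂ V] (h₀ : IsCNorm N₀) (h₁ : IsCNorm N₁) :
    ∃ M, ∀ w, w ≠ 0 → |Real.log (N₁ w / N₀ w)| ≤ M := by
  obtain ⟨C, hC, hC₁⟩ := h₀.exists_le_mul h₁
  obtain ⟨C', hC', hC₀⟩ := h₁.exists_le_mul h₀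
  refine ⟨max (Real.log C) (Real.log C'), fun w hw => abs_le.mpr ⟨?_, ?_⟩⟩
  · have : Real.log (N₀ w / N₁ w) ≤ Real.log C' :=
      Real.log_le_log (div_pos (h₀.pos_of_ne_zero hw) (h₁.pos_of_ne_zero hw))
        ((div_le_iff₀ (h₁.pos_of_ne_zero hw)).mpr (hC₀ w))
    rw [← inv_div, Real.log_inv] at this
    linarith [le_max_right (Real.log C) (Real.log C')]
  · have : Real.log (N₁ w / N₀ w) ≤ Real.log C :=
      Real.log_le_log (div_pos (h₁.pos_of_ne_zero hw) (h₀.pos_of_ne_zero hw))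
        ((div_le_iff₀ (h₀.pos_of_ne_zero hw)).mpr (hC₁ w))
    exact this.trans (le_max_left _ _)

end IsCNorm

namespace Submodule

variable {K V : Type*} [Field K] [AddCommGroup V] [Module K V]

lemma exists_le_finrank_eq (C : Submodule K V) [FiniteDimensional K C] {k : ℕ}
    (hk : k ≤ finrank K C) : ∃ U ≤ C, finrank K U = k := by
  have hli : LinearIndependent K (C.subtype ∘ finBasis K C ∘ Fin.castLE hk) :=
    ((finBasis K C).linearIndependent.comp _ (Fin.castLE_injective hk)).map' _ C.ker_subtype
  refine ⟨span K (Set.range (C.subtype ∘ finBasis K C ∘ Fin.castLE hk)), ?_, ?_⟩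
  · rw [span_le]
    rintro _ ⟨j, rfl⟩
    exact (finBasis K C (Fin.castLE hk j)).2
  · rw [finrank_span_eq_card hli, Fintype.card_fin]

lemma exists_finrank_eq [FiniteDimensional K V] {k : ℕ} (hk : k ≤ finrank K V) :
    ∃ W : Submodule K V, finrank K W = k := by
  obtain ⟨W, -, hW⟩ := (⊤ : Submodule K V).exists_le_finrank_eq (k := k) (by rwa [finrank_top])
  exact ⟨W, hW⟩

lemma exists_finrank_eq_map_subtype_le [FiniteDimensional K V] (E W : Submodule K V) {i : ℕ}
    (h : i + finrank K V ≤ finrank K W + finrank K E) :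
    ∃ U : Submodule K E, finrank K U = i ∧ U.map E.subtype ≤ W := by
  have hcomap : finrank K (W.comap E.subtype) = finrank K ↥(W ⊓ E) := by
    rw [← finrank_map_subtype_eq, map_comap_subtype, inf_comm]
  have hsup := (W ⊔ E).finrank_le
  have hdim := finrank_sup_add_finrank_inf_eq W E
  obtain ⟨U, hU, hUi⟩ := (W.comap E.subtype).exists_le_finrank_eq (k := i) (by omega)
  exact ⟨U, hUi, map_le_iff_le_comap.mpr hU⟩

end Submodule

section MaxMin

variable {K V : Type*} [Field K] [AddCommGroup V] [Module K V] {F : V → ℝ} {M : ℝ}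

noncomputable def infNonzero (F : V → ℝ) (W : Submodule K V) : ℝ :=
  sInf {s : ℝ | ∃ w : V, w ∈ W ∧ w ≠ 0 ∧ s = F w}

noncomputable def maxMin (K : Type*) [Field K] [Module K V] (F : V → ℝ) (j : ℕ) : ℝ :=
  sSup {r : ℝ | ∃ W : Submodule K V, finrank K W = j ∧ r = infNonzero F W}

lemma infNonzero_restrict (E : Submodule K V) (W : Submodule K E) :
    infNonzero (fun w : E => F w) W = infNonzero F (W.map E.subtype) := by
  unfold infNonzero
  congr 1
  ext s
  constructor
  · rintro ⟨w, hw, hw0, rfl⟩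
    exact ⟨w, Submodule.mem_map_of_mem hw, by simpa using hw0, rfl⟩
  · rintro ⟨_, ⟨w, hw, rfl⟩, hw0, rfl⟩
    exact ⟨w, hw, by simpa using hw0, rfl⟩

lemma infNonzero_le_of_abs_le (hF : ∀ w, w ≠ 0 → |F w| ≤ M) {W : Submodule K V} (hW : W ≠ ⊥) :
    infNonzero F W ≤ M := by
  obtain ⟨w, hw, hw0⟩ := W.exists_mem_ne_zero_of_ne_bot hW
  unfold infNonzero
  refine le_trans (csInf_le ⟨-M, ?_⟩ ⟨w, hw, hw0, rfl⟩) (abs_le.mp (hF w hw0)).2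
  rintro _ ⟨w, -, hw0, rfl⟩
  exact (abs_le.mp (hF w hw0)).1

lemma infNonzero_le_infNonzero (hF : ∀ w, w ≠ 0 → -M ≤ F w) {U W : Submodule K V} (hU : U ≠ ⊥)
    (hUW : U ≤ W) : infNonzero F W ≤ infNonzero F U := by
  obtain ⟨w, hw, hw0⟩ := U.exists_mem_ne_zero_of_ne_bot hU
  unfold infNonzero
  refine csInf_le_csInf ⟨-M, ?_⟩ ⟨F w, w, hw, hw0, rfl⟩ ?_
  · rintro _ ⟨w, -, hw0, rfl⟩
    exact hF w hw0
  · rintro _ ⟨w, hw, hw0, rfl⟩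
    exact ⟨w, hUW hw, hw0, rfl⟩

lemma bddAbove_infNonzero_of_finrank_eq (hF : ∀ w, w ≠ 0 → |F w| ≤ M) {j : ℕ} (hj : j ≠ 0) :
    BddAbove {r : ℝ | ∃ W : Submodule K V, finrank K W = j ∧ r = infNonzero F W} := by
  refine ⟨M, ?_⟩
  rintro _ ⟨W, hW, rfl⟩
  exact infNonzero_le_of_abs_le hF fun hbot => hj (by rw [← hW, hbot, finrank_bot])

lemma maxMin_restrict_le (hF : ∀ w, w ≠ 0 → |F w| ≤ M) (E : Submodule K V)
    [FiniteDimensional K E] {i : ℕ} (hi : i ≠ 0) (hiE : i ≤ finrank K E) :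
    maxMin K (fun w : E => F w) i ≤ maxMin K F i := by
  obtain ⟨W₀, hW₀⟩ := Submodule.exists_finrank_eq (K := K) (V := E) hiE
  refine csSup_le ⟨_, W₀, hW₀, rfl⟩ ?_
  rintro _ ⟨W, hW, rfl⟩
  rw [infNonzero_restrict]
  exact le_csSup (bddAbove_infNonzero_of_finrank_eq hF hi)
    ⟨_, by rwa [Submodule.finrank_map_subtype_eq], rfl⟩

lemma maxMin_le_maxMin_restrict [FiniteDimensional K V] (hF : ∀ w, w ≠ 0 → |F w| ≤ M)
    (E : Submodule K V) {i : ℕ} (hi : i ≠ 0) (hiE : i ≤ finrank K E) :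
    maxMin K F (i + finrank K V - finrank K E) ≤ maxMin K (fun w : E => F w) i := by
  have hE := E.finrank_le
  obtain ⟨W₀, hW₀⟩ :=
    Submodule.exists_finrank_eq (K := K) (V := V) (k := i + finrank K V - finrank K E) (by omega)
  refine csSup_le ⟨_, W₀, hW₀, rfl⟩ ?_
  rintro _ ⟨W, hW, rfl⟩
  obtain ⟨U, hUi, hUW⟩ := E.exists_finrank_eq_map_subtype_le W (i := i) (by omega)
  have hU : U.map E.subtype ≠ ⊥ := fun hbot =>
    hi (by rw [← hUi, ← Submodule.finrank_map_subtype_eq, hbot, finrank_bot])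
  calc infNonzero F W ≤ infNonzero F (U.map E.subtype) :=
        infNonzero_le_infNonzero (fun w hw => (abs_le.mp (hF w hw)).1) hU hUW
    _ = infNonzero (fun w : E => F w) U := (infNonzero_restrict E U).symm
    _ ≤ maxMin K (fun w : E => F w) i :=
        le_csSup (bddAbove_infNonzero_of_finrank_eq (F := fun w : E => F w)
          (fun w hw => hF w (by simpa using hw)) hi)
          ⟨U, hUi, rfl⟩

end MaxMin

lemma logSpec_eq_maxMin {V : Type*} [AddCommGroup V] [Module ℂ V] (N N' : V → ℝ) (j : ℕ) :
    logSpec N N' j = maxMin ℂ (fun w => Real.log (N' w / N w)) j :=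
  rfl

theorem logSpec_restrict_interlace_general {V : Type*} [AddCommGroup V] [Module ℂ V]
    [FiniteDimensional ℂ V] (v e : ℕ) (hdim : Module.finrank ℂ V = v)
    (E : Submodule ℂ V) (hdimE : Module.finrank ℂ ↥E = e)
    (N₀ N₁ : V → ℝ) (h₀ : IsCNorm N₀) (h₁ : IsCNorm N₁)
    (i : ℕ) (hi : 1 ≤ i) (hie : i ≤ e) :
    logSpec (fun w : ↥E => N₀ ↑w) (fun w : ↥E => N₁ ↑w) i ≤ logSpec N₀ N₁ i ∧
      logSpec N₀ N₁ (i + v - e) ≤ logSpec (fun w : ↥E => N₀ ↑w) (fun w : ↥E => N₁ ↑w) i := by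
  subst hdim hdimE
  obtain ⟨M, hM⟩ := h₀.exists_abs_log_div_le h₁
  simp only [logSpec_eq_maxMin]
  exact ⟨maxMin_restrict_le hM E (by omega) hie, maxMin_le_maxMin_restrict hM E (by omega) hie⟩

/-- Interlacing of the logarithmic relative spectra under restriction to a subspace:
`λ_i(N₀,N₁) ≥ λ_i(N₀|_E,N₁|_E) ≥ λ_{i+v-e}(N₀,N₁)`. -/
theorem logSpec_restrict_interlace {V : Type*} [AddCommGroup V] [Module ℂ V]
    [FiniteDimensional ℂ V] (v e : ℕ) (hv : 1 ≤ v) (hdim : Module.finrank ℂ V = v)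
    (E : Submodule ℂ V) (he : 1 ≤ e) (hdimE : Module.finrank ℂ ↥E = e)
    (N₀ N₁ : V → ℝ) (h₀ : IsCNorm N₀) (h₁ : IsCNorm N₁)
    (i : ℕ) (hi : 1 ≤ i) (hie : i ≤ e) :
    logSpec (fun w : ↥E => N₀ ↑w) (fun w : ↥E => N₁ ↑w) i ≤ logSpec N₀ N₁ i ∧
      logSpec N₀ N₁ (i + v - e) ≤ logSpec (fun w : ↥E => N₀ ↑w) (fun w : ↥E => N₁ ↑w) i :=
  logSpec_restrict_interlace_general v e hdim E hdimE N₀ N₁ h₀ h₁ i hi hie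
end

section
/- Let R = ⊕_{k≥0} R_k be a graded complex algebra with each R_k finite-dimensional, and let N₀ = (N_{k,0}) and N₁ = (N_{k,1}) be two graded norms on R that are submultiplicative, i.e. ‖f·g‖_{k+l,i} ≤ ‖f‖_{k,i}·‖g‖_{l,i} for all f ∈ R_k, g ∈ R_l, i = 0,1. Then for every t ∈ (0,1), the graded norm N_t = (N_{k,t}), where N_{k,t} is the complex interpolation norm between N_{k,0} and N_{k,1} at parameter t, is submultiplicative. -/
open scoped BigOperators

/-- The complex interpolation norm at parameter `t ∈ (0,1)` between two norms `N₀`, `N₁`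
on a finite-dimensional complex normed space `W`. -/
noncomputable def interpNorm {W : Type*} [NormedAddCommGroup W] [NormedSpace ℂ W]
    (N₀ N₁ : W → ℝ) (t : ℝ) (w : W) : ℝ :=
  sInf {r : ℝ | ∃ f : ℂ → W,
      ContinuousOn f {z : ℂ | 0 ≤ z.re ∧ z.re ≤ 1} ∧
      DifferentiableOn ℂ f {z : ℂ | 0 < z.re ∧ z.re < 1} ∧
      BddAbove (Set.range fun y : ℝ => N₀ (f (Complex.I * y))) ∧
      BddAbove (Set.range fun y : ℝ => N₁ (f (1 + Complex.I * y))) ∧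
      f (t : ℂ) = w ∧
      r = max (⨆ y : ℝ, N₀ (f (Complex.I * y))) (⨆ y : ℝ, N₁ (f (1 + Complex.I * y)))}

/-!
If `F` and `G` are admissible functions on the strip for `f` and `g`, then `z ↦ F z * G z` is
admissible for `f * g`: it is holomorphic because multiplication of finite-dimensional spaces is
a continuous bilinear map, and on each boundary line submultiplicativity bounds its norm by the
product of the suprema of the norms of `F` and `G`. Taking the infimum over `F` and `G` gives the
claim.
-/

open Set

lemma le_ciSup_mul_ciSup_of_le_mul {ι : Type*} {u v w : ι → ℝ} (hu : BddAbove (range u))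
    (hv : BddAbove (range v)) (hu₀ : ∀ i, 0 ≤ u i) (hv₀ : ∀ i, 0 ≤ v i)
    (h : ∀ i, w i ≤ u i * v i) (i : ι) : w i ≤ (⨆ i, u i) * ⨆ i, v i :=
  (h i).trans <| mul_le_mul (le_ciSup hu i) (le_ciSup hv i) (hv₀ i) ((hu₀ i).trans (le_ciSup hu i))

lemma le_csInf_mul_csInf {s t : Set ℝ} {c : ℝ} (hs : s.Nonempty) (ht : t.Nonempty)
    (hs₀ : ∀ a ∈ s, 0 ≤ a) (ht₀ : ∀ b ∈ t, 0 ≤ b) (h : ∀ a ∈ s, ∀ b ∈ t, c ≤ a * b) :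
    c ≤ sInf s * sInf t := by
  have hc : ∀ a ∈ s, c ≤ a * sInf t := fun a ha => by
    rw [← smul_eq_mul, ← Real.sInf_smul_of_nonneg (hs₀ a ha)]
    exact le_csInf ht.smul_set (forall_mem_image.2 (h a ha))
  rw [mul_comm, ← smul_eq_mul, ← Real.sInf_smul_of_nonneg (Real.sInf_nonneg ht₀)]
  exact le_csInf hs.smul_set (forall_mem_image.2 fun a ha => (hc a ha).trans_eq (mul_comm _ _))

section Admissible

variable {W : Type*}

noncomputable def interpBound (N₀ N₁ : W → ℝ) (f : ℂ → W) : ℝ :=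
  max (⨆ y : ℝ, N₀ (f (Complex.I * y))) (⨆ y : ℝ, N₁ (f (1 + Complex.I * y)))

lemma interpBound_nonneg {N₀ : W → ℝ} (hN₀ : ∀ w, 0 ≤ N₀ w) (N₁ : W → ℝ) (f : ℂ → W) :
    0 ≤ interpBound N₀ N₁ f :=
  le_max_of_le_left (Real.iSup_nonneg fun _ => hN₀ _)

variable [NormedAddCommGroup W] [NormedSpace ℂ W]

structure IsInterpAdmissible (N₀ N₁ : W → ℝ) (f : ℂ → W) : Prop where
  continuousOn : ContinuousOn f {z : ℂ | 0 ≤ z.re ∧ z.re ≤ 1}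
  differentiableOn : DifferentiableOn ℂ f {z : ℂ | 0 < z.re ∧ z.re < 1}
  bddAbove_left : BddAbove (range fun y : ℝ => N₀ (f (Complex.I * y)))
  bddAbove_right : BddAbove (range fun y : ℝ => N₁ (f (1 + Complex.I * y)))

lemma IsInterpAdmissible.const (N₀ N₁ : W → ℝ) (w : W) :
    IsInterpAdmissible N₀ N₁ fun _ => w where
  continuousOn := continuousOn_const
  differentiableOn := differentiableOn_const w
  bddAbove_left := by simp
  bddAbove_right := by simp

lemma interpNorm_eq_sInf_image (N₀ N₁ : W → ℝ) (t : ℝ) (w : W) :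
    interpNorm N₀ N₁ t w =
      sInf (interpBound N₀ N₁ '' {f | IsInterpAdmissible N₀ N₁ f ∧ f t = w}) := by
  rw [interpNorm]
  congr 1
  ext r
  constructor
  · rintro ⟨f, hc, hd, h₀, h₁, hw, rfl⟩
    exact ⟨f, ⟨⟨hc, hd, h₀, h₁⟩, hw⟩, rfl⟩
  · rintro ⟨f, ⟨⟨hc, hd, h₀, h₁⟩, hw⟩, rfl⟩
    exact ⟨f, hc, hd, h₀, h₁, hw, rfl⟩

lemma interpNorm_le_interpBound {N₀ N₁ : W → ℝ} (hN₀ : ∀ w, 0 ≤ N₀ w) {f : ℂ → W}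
    (hf : IsInterpAdmissible N₀ N₁ f) (t : ℝ) : interpNorm N₀ N₁ t (f t) ≤ interpBound N₀ N₁ f := by
  rw [interpNorm_eq_sInf_image]
  exact csInf_le ⟨0, forall_mem_image.2 fun g _ => interpBound_nonneg hN₀ N₁ g⟩ ⟨f, ⟨hf, rfl⟩, rfl⟩

lemma le_interpNorm_mul_interpNorm {N₀ N₁ : W → ℝ} (hN₀ : ∀ w, 0 ≤ N₀ w)
    {V : Type*} [NormedAddCommGroup V] [NormedSpace ℂ V] {M₀ M₁ : V → ℝ} (hM₀ : ∀ v, 0 ≤ M₀ v)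
    {t : ℝ} {w : W} {v : V} {c : ℝ}
    (h : ∀ f g, IsInterpAdmissible N₀ N₁ f → f t = w → IsInterpAdmissible M₀ M₁ g → g t = v →
      c ≤ interpBound N₀ N₁ f * interpBound M₀ M₁ g) :
    c ≤ interpNorm N₀ N₁ t w * interpNorm M₀ M₁ t v := by
  rw [interpNorm_eq_sInf_image, interpNorm_eq_sInf_image]
  refine le_csInf_mul_csInf ⟨_, _, ⟨.const _ _ w, rfl⟩, rfl⟩ ⟨_, _, ⟨.const _ _ v, rfl⟩, rfl⟩
    (forall_mem_image.2 fun f _ => interpBound_nonneg hN₀ N₁ f)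
    (forall_mem_image.2 fun g _ => interpBound_nonneg hM₀ M₁ g) ?_
  rintro _ ⟨f, ⟨hf, hfw⟩, rfl⟩ _ ⟨g, ⟨hg, hgv⟩, rfl⟩
  exact h f g hf hfw hg hgv

end Admissible

section Product

variable {W₁ W₂ W₃ : Type*} [NormedAddCommGroup W₁] [NormedSpace ℂ W₁]
  [NormedAddCommGroup W₂] [NormedSpace ℂ W₂]
  {M₀ M₁ : W₁ → ℝ} {P₀ P₁ : W₂ → ℝ} {Q₀ Q₁ : W₃ → ℝ} {F : ℂ → W₁} {G : ℂ → W₂}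

lemma interpBound_le_mul_of_le_mul (hM₀ : ∀ x, 0 ≤ M₀ x) (hM₁ : ∀ x, 0 ≤ M₁ x)
    (hP₀ : ∀ y, 0 ≤ P₀ y) (hP₁ : ∀ y, 0 ≤ P₁ y)
    (hF : IsInterpAdmissible M₀ M₁ F) (hG : IsInterpAdmissible P₀ P₁ G) {H : ℂ → W₃}
    (hH₀ : ∀ z, Q₀ (H z) ≤ M₀ (F z) * P₀ (G z)) (hH₁ : ∀ z, Q₁ (H z) ≤ M₁ (F z) * P₁ (G z)) :
    interpBound Q₀ Q₁ H ≤ interpBound M₀ M₁ F * interpBound P₀ P₁ G := by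
  refine max_le ((ciSup_le <| le_ciSup_mul_ciSup_of_le_mul hF.bddAbove_left hG.bddAbove_left
      (fun _ => hM₀ _) (fun _ => hP₀ _) fun _ => hH₀ _).trans ?_)
    ((ciSup_le <| le_ciSup_mul_ciSup_of_le_mul hF.bddAbove_right hG.bddAbove_right
      (fun _ => hM₁ _) (fun _ => hP₁ _) fun _ => hH₁ _).trans ?_)
  · exact mul_le_mul (le_max_left _ _) (le_max_left _ _) (Real.iSup_nonneg fun _ => hP₀ _)
      (interpBound_nonneg hM₀ M₁ F)
  · exact mul_le_mul (le_max_right _ _) (le_max_right _ _) (Real.iSup_nonneg fun _ => hP₁ _)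
      (interpBound_nonneg hM₀ M₁ F)

lemma IsInterpAdmissible.bilinear [NormedAddCommGroup W₃] [NormedSpace ℂ W₃]
    [FiniteDimensional ℂ W₁] [FiniteDimensional ℂ W₂]
    (B : W₁ →ₗ[ℂ] W₂ →ₗ[ℂ] W₃) (hM₀ : ∀ x, 0 ≤ M₀ x) (hM₁ : ∀ x, 0 ≤ M₁ x)
    (hP₀ : ∀ y, 0 ≤ P₀ y) (hP₁ : ∀ y, 0 ≤ P₁ y)
    (hB₀ : ∀ x y, Q₀ (B x y) ≤ M₀ x * P₀ y) (hB₁ : ∀ x y, Q₁ (B x y) ≤ M₁ x * P₁ y)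
    (hF : IsInterpAdmissible M₀ M₁ F) (hG : IsInterpAdmissible P₀ P₁ G) :
    IsInterpAdmissible Q₀ Q₁ fun z => B (F z) (G z) where
  continuousOn := B.toContinuousBilinearMap.isBoundedBilinearMap.continuous.comp_continuousOn
    (hF.continuousOn.prodMk hG.continuousOn)
  differentiableOn :=
    B.toContinuousBilinearMap.isBoundedBilinearMap.differentiable.comp_differentiableOn
      (hF.differentiableOn.prodMk hG.differentiableOn)
  bddAbove_left := ⟨_, forall_mem_range.2 <| le_ciSup_mul_ciSup_of_le_mul hF.bddAbove_left
    hG.bddAbove_left (fun _ => hM₀ _) (fun _ => hP₀ _) fun _ => hB₀ _ _⟩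
  bddAbove_right := ⟨_, forall_mem_range.2 <| le_ciSup_mul_ciSup_of_le_mul hF.bddAbove_right
    hG.bddAbove_right (fun _ => hM₁ _) (fun _ => hP₁ _) fun _ => hB₁ _ _⟩

end Product

theorem interpNorm_submultiplicative_general (R : ℕ → Type) [∀ k, NormedAddCommGroup (R k)]
    [∀ k, NormedSpace ℂ (R k)] [∀ k, FiniteDimensional ℂ (R k)]
    (mul : ∀ k l, R k →ₗ[ℂ] R l →ₗ[ℂ] R (k + l))
    (N₀ N₁ : ∀ k, R k → ℝ)
    (hn₀ : ∀ k, IsCNorm (N₀ k)) (hn₁ : ∀ k, IsCNorm (N₁ k))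
    (hsub₀ : ∀ k l (f : R k) (g : R l), N₀ (k + l) (mul k l f g) ≤ N₀ k f * N₀ l g)
    (hsub₁ : ∀ k l (f : R k) (g : R l), N₁ (k + l) (mul k l f g) ≤ N₁ k f * N₁ l g)
    (t : ℝ) :
    ∀ k l (f : R k) (g : R l),
      interpNorm (N₀ (k + l)) (N₁ (k + l)) t (mul k l f g) ≤
        interpNorm (N₀ k) (N₁ k) t f * interpNorm (N₀ l) (N₁ l) t g := by
  intro k l f g
  refine le_interpNorm_mul_interpNorm (hn₀ k).nonneg (hn₀ l).nonneg ?_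
  rintro F G hF rfl hG rfl
  have hFG := hF.bilinear (mul k l) (hn₀ k).nonneg (hn₁ k).nonneg (hn₀ l).nonneg (hn₁ l).nonneg
    (hsub₀ k l) (hsub₁ k l) hG
  calc interpNorm (N₀ (k + l)) (N₁ (k + l)) t (mul k l (F t) (G t))
      ≤ interpBound (N₀ (k + l)) (N₁ (k + l)) fun z => mul k l (F z) (G z) :=
        interpNorm_le_interpBound (hn₀ (k + l)).nonneg hFG t
    _ ≤ interpBound (N₀ k) (N₁ k) F * interpBound (N₀ l) (N₁ l) G :=
        interpBound_le_mul_of_le_mul (hn₀ k).nonneg (hn₁ k).nonneg (hn₀ l).nonneg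
          (hn₁ l).nonneg hF hG (fun z => hsub₀ k l _ _) fun z => hsub₁ k l _ _

/-- Complex interpolation of two submultiplicative graded norms on a graded algebra
`R = ⊕ R_k` (with multiplication given by the bilinear maps `mul k l`) is submultiplicative. -/
theorem interpNorm_submultiplicative (R : ℕ → Type) [∀ k, NormedAddCommGroup (R k)]
    [∀ k, NormedSpace ℂ (R k)] [∀ k, FiniteDimensional ℂ (R k)]
    (mul : ∀ k l, R k →ₗ[ℂ] R l →ₗ[ℂ] R (k + l))
    (N₀ N₁ : ∀ k, R k → ℝ)
    (hn₀ : ∀ k, IsCNorm (N₀ k)) (hn₁ : ∀ k, IsCNorm (N₁ k))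
    (hsub₀ : ∀ k l (f : R k) (g : R l), N₀ (k + l) (mul k l f g) ≤ N₀ k f * N₀ l g)
    (hsub₁ : ∀ k l (f : R k) (g : R l), N₁ (k + l) (mul k l f g) ≤ N₁ k f * N₁ l g)
    (t : ℝ) (ht0 : 0 < t) (ht1 : t < 1) :
    ∀ k l (f : R k) (g : R l),
      interpNorm (N₀ (k + l)) (N₁ (k + l)) t (mul k l f g) ≤
        interpNorm (N₀ k) (N₁ k) t f * interpNorm (N₀ l) (N₁ l) t g :=
  interpNorm_submultiplicative_general R mul N₀ N₁ hn₀ hn₁ hsub₀ hsub₁ t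
end

section
/- Let V be a complex vector space of dimension v with a decreasing left-continuous ℝ-filtration F, let N₀ be a norm and H₀ a Hermitian norm on V. For t ≥ 0, define N_t by ‖f‖_{N_t} = inf{∑_i e^{−t·μ_i}·‖f_i‖_{N₀} : f = ∑_i f_i, f_i ∈ F^{μ_i}V}, and define H_t from H₀ via an adapted orthonormal basis s_i ∈ F^{e(i)}V by declaring (e^{t·e(i)}s_i)_i orthonormal. Then d_{∞}(H_t, N_t) ≤ d_{∞}(H₀, N₀) + log v for all t ≥ 0, where d_∞(N,N') is the minimal C ≥ 0 such that e^{−C}·N ≤ N' ≤ e^{C}·N. -/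
open scoped BigOperators

/-- The `j`-th jumping number of a decreasing filtration `F`:
`e(j) = sup {t : dim F^t V ≥ j}`. -/
noncomputable def jumpNum {V : Type*} [AddCommGroup V] [Module ℂ V]
    (F : ℝ → Submodule ℂ V) (j : ℕ) : ℝ :=
  sSup {t : ℝ | j ≤ Module.finrank ℂ ↥(F t)}

/-- The ray of norms emanating from a norm `N₀` and associated with a filtration `F`:
`‖f‖_{N_t} = inf {∑ e^{-t μ_i} ‖f_i‖_{N₀} : f = ∑ f_i, f_i ∈ F^{μ_i} V}`. -/
noncomputable def rayNorm {V : Type*} [AddCommGroup V] [Module ℂ V]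
    (F : ℝ → Submodule ℂ V) (N₀ : V → ℝ) (t : ℝ) (f : V) : ℝ :=
  sInf {r : ℝ | ∃ (n : ℕ) (μ : Fin n → ℝ) (g : Fin n → V),
      (∀ i, g i ∈ F (μ i)) ∧ f = ∑ i, g i ∧ r = ∑ i, Real.exp (-t * μ i) * N₀ (g i)}

/-- The Hermitian norm `H_t` for which the basis `(e^{t e(i)} s i)` is orthonormal. -/
noncomputable def rayHerm {V : Type*} [NormedAddCommGroup V] [InnerProductSpace ℂ V]
    {v : ℕ} (s : Fin v → V) (e : Fin v → ℝ) (t : ℝ) (w : V) : ℝ :=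
  Real.sqrt (∑ i, Real.exp (-2 * t * e i) * ‖(inner ℂ (s i) w : ℂ)‖ ^ 2)

/-- The distance `d_∞(N,N')`: the least `C ≥ 0` with `e^{-C} N ≤ N' ≤ e^{C} N`. -/
noncomputable def dInfty {V : Type*} (N N' : V → ℝ) : ℝ :=
  sInf {C : ℝ | 0 ≤ C ∧ ∀ w, Real.exp (-C) * N w ≤ N' w ∧ N' w ≤ Real.exp C * N w}

/-! The upper bound `N_t ≤ e^{d} v H_t`, with `d = d_∞(H₀, N₀)`, comes from the decomposition
`f = ∑ ⟪s i, f⟫ s i` with `⟪s i, f⟫ s i ∈ F^{e(i)}`: each term costs at most `e^{d}` times the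
`i`-th `H_t`-coordinate of `f`, and a sum of `v` coordinates is at most `v H_t(f)`. For the lower
bound `e^{-d} H_t ≤ N_t` it suffices that `H_t` is subadditive and `H_t ≤ e^{-tμ} H₀` on `F^μ`;
the latter holds because `F^μ` is spanned by the `s i` with `e(i) ≥ μ` (left continuity and a
dimension count), so only coordinates with weight `e^{-t e(i)} ≤ e^{-tμ}` survive. -/

open Module

section DInfty

variable {V : Type*}

def IsDInftyBound (N N' : V → ℝ) (C : ℝ) : Prop :=
  0 ≤ C ∧ ∀ w, Real.exp (-C) * N w ≤ N' w ∧ N' w ≤ Real.exp C * N w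

theorem isClosed_setOf_isDInftyBound (N N' : V → ℝ) : IsClosed {C | IsDInftyBound N N' C} := by
  simp only [IsDInftyBound, Set.ofPred_and, Set.ofPred_forall]
  exact (isClosed_le continuous_const continuous_id).inter <| isClosed_iInter fun w =>
    (isClosed_le (by fun_prop) continuous_const).inter (isClosed_le continuous_const (by fun_prop))

theorem bddBelow_setOf_isDInftyBound (N N' : V → ℝ) : BddBelow {C | IsDInftyBound N N' C} :=
  ⟨0, fun _ hC => hC.1⟩

theorem dInfty_le {N N' : V → ℝ} {C : ℝ} (h : IsDInftyBound N N' C) : dInfty N N' ≤ C :=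
  csInf_le (bddBelow_setOf_isDInftyBound N N') h

theorem isDInftyBound_dInfty {N N' : V → ℝ} (h : ∃ C, IsDInftyBound N N' C) :
    IsDInftyBound N N' (dInfty N N') :=
  (isClosed_setOf_isDInftyBound N N').csInf_mem h (bddBelow_setOf_isDInftyBound N N')

end DInfty

section NormEquiv

/-- A copy of `V`, to be normed by some `N : V → ℝ` other than the norm of `V`. -/
def CNormed (V : Type*) : Type _ := V

variable {V : Type*} [NormedAddCommGroup V] [NormedSpace ℂ V] [FiniteDimensional ℂ V]

theorem IsCNorm.exists_le_mul_norm_and_norm_le_mul {N : V → ℝ} (h : IsCNorm N) :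
    ∃ C, ∀ w, N w ≤ C * ‖w‖ ∧ ‖w‖ ≤ C * N w := by
  let _ : AddCommGroup (CNormed V) := inferInstanceAs (AddCommGroup V)
  let _ : Module ℂ (CNormed V) := inferInstanceAs (Module ℂ V)
  let _ : Norm (CNormed V) := ⟨N⟩
  have core : NormedSpace.Core ℂ (CNormed V) :=
    { norm_nonneg := h.nonneg
      norm_smul := h.smul
      norm_triangle := h.triangle
      norm_eq_zero_iff := fun w =>
        ⟨h.eq_zero w, fun hw => by subst hw; exact (by simpa using h.smul 0 0 : N 0 = 0)⟩ }
  let _ : NormedAddCommGroup (CNormed V) := .ofCore core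
  let _ : NormedSpace ℂ (CNormed V) := .ofCore core
  let _ : FiniteDimensional ℂ (CNormed V) := inferInstanceAs (FiniteDimensional ℂ V)
  let φ : V ≃ₗ[ℂ] CNormed V := LinearEquiv.refl ℂ V
  let ψ : V ≃L[ℂ] CNormed V := φ.toContinuousLinearEquiv
  refine ⟨max ‖(ψ : V →L[ℂ] CNormed V)‖ ‖(ψ.symm : CNormed V →L[ℂ] V)‖, fun w => ⟨?_, ?_⟩⟩
  · calc N w = ‖ψ w‖ := rfl
      _ ≤ _ := ψ.toContinuousLinearMap.le_opNorm w
      _ ≤ _ := by gcongr; exact le_max_left _ _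
  · calc ‖w‖ = ‖ψ.symm (ψ w)‖ := by rw [ψ.symm_apply_apply]
      _ ≤ _ := ψ.symm.toContinuousLinearMap.le_opNorm (ψ w)
      _ ≤ _ := mul_le_mul_of_nonneg_right (le_max_right _ _) (h.nonneg w)

theorem IsCNorm.exists_isDInftyBound {N : V → ℝ} (h : IsCNorm N) :
    ∃ C, IsDInftyBound (fun w : V => ‖w‖) N C := by
  obtain ⟨C, hC⟩ := h.exists_le_mul_norm_and_norm_le_mul
  have hM : 0 < max 1 C := lt_max_of_lt_left one_pos
  refine ⟨Real.log (max 1 C), Real.log_nonneg (le_max_left _ _), fun w => ⟨?_, ?_⟩⟩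
  · rw [Real.exp_neg, Real.exp_log hM, inv_mul_le_iff₀ hM]
    exact (hC w).2.trans (by gcongr; exacts [h.nonneg w, le_max_right _ _])
  · rw [Real.exp_log hM]
    exact (hC w).1.trans (by gcongr; exact le_max_right _ _)

end NormEquiv

section JumpingNumbers

variable {V : Type*} [AddCommGroup V] [Module ℂ V] {F : ℝ → Submodule ℂ V} {j : ℕ}

theorem bddAbove_setOf_le_finrank (hbot : ∃ T : ℝ, ∀ t ≥ T, F t = ⊥) (hj : 1 ≤ j) :
    BddAbove {t : ℝ | j ≤ finrank ℂ (F t)} := by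
  obtain ⟨T, hT⟩ := hbot
  refine ⟨T, fun u hu => le_of_not_gt fun hTu => ?_⟩
  have : j ≤ finrank ℂ (⊥ : Submodule ℂ V) := hT u hTu.le ▸ hu
  rw [finrank_bot] at this
  omega

theorem nonempty_setOf_le_finrank (htop : ∃ T : ℝ, ∀ t ≤ T, F t = ⊤) (hj : j ≤ finrank ℂ V) :
    {t : ℝ | j ≤ finrank ℂ (F t)}.Nonempty := by
  obtain ⟨T, hT⟩ := htop
  exact ⟨T, by rwa [Set.mem_ofPred_eq, hT T le_rfl, finrank_top]⟩

/-- Left continuity makes the supremum defining `jumpNum F j` a maximum. -/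
theorem le_finrank_jumpNum (hlc : ∀ t : ℝ, ∃ ε > 0, ∀ u : ℝ, t - ε < u → u ≤ t → F u = F t)
    (hne : {t : ℝ | j ≤ finrank ℂ (F t)}.Nonempty) (hbdd : BddAbove {t : ℝ | j ≤ finrank ℂ (F t)}) :
    j ≤ finrank ℂ (F (jumpNum F j)) := by
  obtain ⟨ε, hε, hF⟩ := hlc (jumpNum F j)
  obtain ⟨u, hu, hεu⟩ := exists_lt_of_lt_csSup hne (sub_lt_self (jumpNum F j) hε)
  rwa [Set.mem_ofPred_eq, hF u hεu (le_csSup hbdd hu)] at hu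

theorem le_jumpNum_iff [FiniteDimensional ℂ V] (hanti : Antitone F)
    (hlc : ∀ t : ℝ, ∃ ε > 0, ∀ u : ℝ, t - ε < u → u ≤ t → F u = F t)
    (hbot : ∃ T : ℝ, ∀ t ≥ T, F t = ⊥) (htop : ∃ T : ℝ, ∀ t ≤ T, F t = ⊤)
    (hj₁ : 1 ≤ j) (hj : j ≤ finrank ℂ V) (μ : ℝ) :
    μ ≤ jumpNum F j ↔ j ≤ finrank ℂ (F μ) := by
  have hbdd := bddAbove_setOf_le_finrank hbot hj₁
  refine ⟨fun hμ => ?_, fun hμ => le_csSup hbdd hμ⟩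
  exact (le_finrank_jumpNum hlc (nonempty_setOf_le_finrank htop hj) hbdd).trans
    (Submodule.finrank_mono (hanti hμ))

end JumpingNumbers

theorem Orthonormal.inner_eq_zero_of_mem_of_finrank_le {𝕜 E ι : Type*} [RCLike 𝕜]
    [NormedAddCommGroup E] [InnerProductSpace 𝕜 E] {s : ι → E} (hs : Orthonormal 𝕜 s)
    {W : Submodule 𝕜 E} [FiniteDimensional 𝕜 W] {T : Finset ι} (hT : ∀ j ∈ T, s j ∈ W)
    (hrank : finrank 𝕜 W ≤ T.card) {i : ι} (hi : i ∉ T) {g : E} (hg : g ∈ W) :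
    inner 𝕜 (s i) g = 0 := by
  let b : T → E := fun j => s j
  have hspan : Submodule.span 𝕜 (Set.range b) = W := by
    refine Submodule.eq_of_le_of_finrank_le (Submodule.span_le.2 ?_) ?_
    · rintro _ ⟨j, rfl⟩
      exact hT j j.2
    · have hb : LinearIndependent 𝕜 b := hs.linearIndependent.comp _ Subtype.val_injective
      rwa [finrank_span_eq_card hb, Fintype.card_coe]
  have hW : W ≤ (𝕜 ∙ s i)ᗮ := by
    rw [← hspan, Submodule.span_le]
    rintro _ ⟨j, rfl⟩
    exact Submodule.mem_orthogonal_singleton_iff_inner_right.2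
      (hs.2 fun hij => hi (hij ▸ j.2))
  exact Submodule.mem_orthogonal_singleton_iff_inner_right.1 (hW hg)

/-- Each `F μ` is spanned by the `s i` with `μ ≤ e(i)`, so it is orthogonal to the others. -/
theorem inner_eq_zero_of_jumpNum_lt {V : Type*} [NormedAddCommGroup V]
    [InnerProductSpace ℂ V] [FiniteDimensional ℂ V] {v : ℕ} (hdim : finrank ℂ V = v)
    {F : ℝ → Submodule ℂ V} (hanti : Antitone F)
    (hlc : ∀ t : ℝ, ∃ ε > 0, ∀ u : ℝ, t - ε < u → u ≤ t → F u = F t)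
    (hbot : ∃ T : ℝ, ∀ t ≥ T, F t = ⊥) (htop : ∃ T : ℝ, ∀ t ≤ T, F t = ⊤)
    {s : Fin v → V} (hon : Orthonormal ℂ s) (hadapt : ∀ i : Fin v, s i ∈ F (jumpNum F (i.1 + 1)))
    {μ : ℝ} {g : V} (hg : g ∈ F μ) {i : Fin v} (hi : jumpNum F (i.1 + 1) < μ) :
    inner ℂ (s i) g = 0 := by
  have hjump (j : Fin v) : μ ≤ jumpNum F (j.1 + 1) ↔ j.1 < finrank ℂ (F μ) :=
    le_jumpNum_iff hanti hlc hbot htop (by omega) (by omega) μ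
  refine hon.inner_eq_zero_of_mem_of_finrank_le (T := {j | j.1 < finrank ℂ (F μ)})
    (fun j hj => hanti (by simpa [hjump] using hj) (hadapt j)) ?_ (by simpa [← hjump]) hg
  rw [Fin.card_filter_val_lt, ← hdim]
  exact le_min (Submodule.finrank_le _) le_rfl

section RayHerm

variable {V : Type*} [NormedAddCommGroup V] [InnerProductSpace ℂ V] {v : ℕ}
  (s : Fin v → V) (e : Fin v → ℝ) (t : ℝ)

theorem exp_neg_two_mul_mul_eq_sq (x : ℝ) : Real.exp (-2 * t * x) = Real.exp (-t * x) ^ 2 := by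
  rw [sq, ← Real.exp_add]
  ring_nf

noncomputable def rayHermMap : V →ₗ[ℂ] EuclideanSpace ℂ (Fin v) :=
  (WithLp.linearEquiv 2 ℂ (Fin v → ℂ)).symm.toLinearMap ∘ₗ
    LinearMap.pi fun i => (Real.exp (-t * e i) : ℂ) • innerₛₗ ℂ (s i)

theorem norm_rayHermMap_apply (w : V) (i : Fin v) :
    ‖(rayHermMap s e t w).ofLp i‖ = Real.exp (-t * e i) * ‖inner ℂ (s i) w‖ := by
  have : (rayHermMap s e t w).ofLp i = (Real.exp (-t * e i) : ℂ) * inner ℂ (s i) w := rfl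
  rw [this, norm_mul, Complex.norm_real, Real.norm_of_nonneg (Real.exp_pos _).le]

theorem rayHerm_eq_norm (w : V) : rayHerm s e t w = ‖rayHermMap s e t w‖ := by
  rw [rayHerm, EuclideanSpace.norm_eq]
  congr 1
  refine Finset.sum_congr rfl fun i _ => ?_
  rw [norm_rayHermMap_apply, mul_pow, exp_neg_two_mul_mul_eq_sq]

theorem rayHerm_sum_le {n : ℕ} (g : Fin n → V) :
    rayHerm s e t (∑ i, g i) ≤ ∑ i, rayHerm s e t (g i) := by
  simp only [rayHerm_eq_norm, map_sum]
  exact norm_sum_le _ _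

theorem sum_exp_mul_norm_inner_le (w : V) :
    ∑ i, Real.exp (-t * e i) * ‖inner ℂ (s i) w‖ ≤ v * rayHerm s e t w := by
  calc ∑ i, Real.exp (-t * e i) * ‖inner ℂ (s i) w‖
      = ∑ i, ‖(rayHermMap s e t w).ofLp i‖ := by simp only [norm_rayHermMap_apply]
    _ ≤ Finset.univ.card • ‖rayHermMap s e t w‖ :=
      Finset.sum_le_card_nsmul _ _ _ fun i _ => PiLp.norm_apply_le _ i
    _ = v * rayHerm s e t w := by simp [rayHerm_eq_norm]

variable {s e t}

theorem rayHerm_le_exp_mul_norm (hon : Orthonormal ℂ s) (ht : 0 ≤ t) {μ : ℝ} {g : V}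
    (hg : ∀ i, e i < μ → inner ℂ (s i) g = 0) :
    rayHerm s e t g ≤ Real.exp (-t * μ) * ‖g‖ := by
  have hterm (i : Fin v) : Real.exp (-2 * t * e i) * ‖inner ℂ (s i) g‖ ^ 2 ≤
      Real.exp (-t * μ) ^ 2 * ‖inner ℂ (s i) g‖ ^ 2 := by
    by_cases hi : e i < μ
    · simp [hg i hi]
    · have hexp : Real.exp (-t * e i) ≤ Real.exp (-t * μ) :=
        Real.exp_le_exp.2 (by nlinarith)
      rw [exp_neg_two_mul_mul_eq_sq]
      gcongr
  rw [rayHerm, ← Real.sqrt_sq (by positivity : 0 ≤ Real.exp (-t * μ) * ‖g‖)]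
  refine Real.sqrt_le_sqrt ?_
  calc ∑ i, Real.exp (-2 * t * e i) * ‖inner ℂ (s i) g‖ ^ 2
      ≤ Real.exp (-t * μ) ^ 2 * ∑ i, ‖inner ℂ (s i) g‖ ^ 2 := by
        rw [Finset.mul_sum]
        exact Finset.sum_le_sum fun i _ => hterm i
    _ ≤ Real.exp (-t * μ) ^ 2 * ‖g‖ ^ 2 := by
        gcongr
        exact hon.sum_inner_products_le g
    _ = (Real.exp (-t * μ) * ‖g‖) ^ 2 := (mul_pow _ _ _).symm

end RayHerm

section RayNorm

variable {V : Type*} [AddCommGroup V] [Module ℂ V] {F : ℝ → Submodule ℂ V} {N : V → ℝ} {t : ℝ}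

theorem rayNorm_sum_le (hN : ∀ w, 0 ≤ N w) {n : ℕ} {μ : Fin n → ℝ} {g : Fin n → V}
    (hg : ∀ i, g i ∈ F (μ i)) :
    rayNorm F N t (∑ i, g i) ≤ ∑ i, Real.exp (-t * μ i) * N (g i) := by
  refine csInf_le ⟨0, ?_⟩ ⟨n, μ, g, hg, rfl, rfl⟩
  rintro _ ⟨n, μ, g, -, -, rfl⟩
  exact Finset.sum_nonneg fun i _ => mul_nonneg (Real.exp_pos _).le (hN _)

theorem le_rayNorm {H : V → ℝ} (hsub : ∀ (n : ℕ) (g : Fin n → V), H (∑ i, g i) ≤ ∑ i, H (g i))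
    (hH : ∀ μ, ∀ g ∈ F μ, H g ≤ Real.exp (-t * μ) * N g) {f : V} (hf : ∃ μ, f ∈ F μ) :
    H f ≤ rayNorm F N t f := by
  obtain ⟨μ, hμ⟩ := hf
  refine le_csInf ⟨_, 1, fun _ => μ, fun _ => f, fun _ => hμ, by simp, rfl⟩ ?_
  rintro _ ⟨n, μ, g, hg, rfl, rfl⟩
  exact (hsub n g).trans (Finset.sum_le_sum fun i _ => hH _ _ (hg i))

end RayNorm

section Comparison

variable {V : Type*} [NormedAddCommGroup V] [InnerProductSpace ℂ V] {v : ℕ}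
  {F : ℝ → Submodule ℂ V} {N₀ : V → ℝ} {s : Fin v → V} {e : Fin v → ℝ} {t d : ℝ}

theorem exp_neg_mul_rayHerm_le_rayNorm (hon : Orthonormal ℂ s) (ht : 0 ≤ t)
    (hperp : ∀ μ, ∀ g ∈ F μ, ∀ i, e i < μ → inner ℂ (s i) g = 0)
    (hN₀ : ∀ w, Real.exp (-d) * ‖w‖ ≤ N₀ w) {f : V} (hf : ∃ μ, f ∈ F μ) :
    Real.exp (-d) * rayHerm s e t f ≤ rayNorm F N₀ t f := by
  refine le_rayNorm (H := fun w => Real.exp (-d) * rayHerm s e t w) (fun n g => ?_)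
    (fun μ g hg => ?_) hf
  · rw [← Finset.mul_sum]
    exact mul_le_mul_of_nonneg_left (rayHerm_sum_le s e t g) (Real.exp_pos _).le
  · calc Real.exp (-d) * rayHerm s e t g ≤ Real.exp (-d) * (Real.exp (-t * μ) * ‖g‖) := by
          gcongr
          exact rayHerm_le_exp_mul_norm hon ht (hperp μ g hg)
      _ = Real.exp (-t * μ) * (Real.exp (-d) * ‖g‖) := by ring
      _ ≤ Real.exp (-t * μ) * N₀ g := by
          gcongr
          exact hN₀ g

theorem rayNorm_le_exp_mul_rayHerm (hN₀ : IsCNorm N₀) (hadapt : ∀ i, s i ∈ F (e i))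
    (hs : ∀ i, N₀ (s i) ≤ Real.exp d) {f : V} (hf : ∑ i, inner ℂ (s i) f • s i = f) :
    rayNorm F N₀ t f ≤ Real.exp d * (v * rayHerm s e t f) := by
  calc rayNorm F N₀ t f = rayNorm F N₀ t (∑ i, inner ℂ (s i) f • s i) := by rw [hf]
    _ ≤ ∑ i, Real.exp (-t * e i) * N₀ (inner ℂ (s i) f • s i) :=
        rayNorm_sum_le hN₀.nonneg fun i => (F (e i)).smul_mem _ (hadapt i)
    _ ≤ ∑ i, Real.exp d * (Real.exp (-t * e i) * ‖inner ℂ (s i) f‖) := by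
        refine Finset.sum_le_sum fun i _ => ?_
        rw [hN₀.smul, ← mul_assoc, mul_comm (Real.exp d)]
        gcongr
        exact hs i
    _ = Real.exp d * ∑ i, Real.exp (-t * e i) * ‖inner ℂ (s i) f‖ := (Finset.mul_sum _ _ _).symm
    _ ≤ Real.exp d * (v * rayHerm s e t f) := by
        gcongr
        exact sum_exp_mul_norm_inner_le s e t f

end Comparison

theorem dInfty_rayHerm_rayNorm_le_general {V : Type*} [NormedAddCommGroup V]
    [InnerProductSpace ℂ V] [FiniteDimensional ℂ V]
    (v : ℕ) (hdim : Module.finrank ℂ V = v)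
    (F : ℝ → Submodule ℂ V)
    (hdec : ∀ t s' : ℝ, s' < t → F t ≤ F s')
    (hlc : ∀ t : ℝ, ∃ ε > 0, ∀ u : ℝ, t - ε < u → u ≤ t → F u = F t)
    (hbot : ∃ T : ℝ, ∀ t ≥ T, F t = ⊥) (htop : ∃ T : ℝ, ∀ t ≤ T, F t = ⊤)
    (N₀ : V → ℝ) (hN₀ : IsCNorm N₀)
    (s : Fin v → V) (hon : Orthonormal ℂ s)
    (hadapt : ∀ i : Fin v, s i ∈ F (jumpNum F (i.1 + 1)))
    (t : ℝ) (ht : 0 ≤ t) :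
    dInfty (rayHerm s (fun i => jumpNum F (i.1 + 1)) t) (rayNorm F N₀ t) ≤
      dInfty (fun w : V => ‖w‖) N₀ + Real.log v := by
  have hanti : Antitone F := fun a b hab => hab.eq_or_lt.elim (fun h => h ▸ le_rfl) (hdec b a)
  obtain ⟨hd, hbound⟩ := isDInftyBound_dInfty hN₀.exists_isDInftyBound
  set d := dInfty (fun w : V => ‖w‖) N₀
  have hspan := hon.linearIndependent.span_eq_top_of_card_eq_finrank' (by simp [hdim])
  have hexpand (f : V) : ∑ i, inner ℂ (s i) f • s i = f := by
    simpa using (OrthonormalBasis.mk hon hspan.ge).sum_repr' f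
  have hHt (f : V) : 0 ≤ rayHerm s (fun i => jumpNum F (i.1 + 1)) t f := Real.sqrt_nonneg _
  refine dInfty_le ⟨add_nonneg hd (Real.log_natCast_nonneg v), fun f => ⟨?_, ?_⟩⟩
  · calc _ ≤ Real.exp (-d) * rayHerm s (fun i => jumpNum F (i.1 + 1)) t f := by
          refine mul_le_mul_of_nonneg_right (Real.exp_le_exp.2 ?_) (hHt f)
          linarith [Real.log_natCast_nonneg v]
      _ ≤ rayNorm F N₀ t f :=
        exp_neg_mul_rayHerm_le_rayNorm hon ht
          (fun μ g hg i hi => inner_eq_zero_of_jumpNum_lt hdim hanti hlc hbot htop hon hadapt hg hi)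
          (fun w => (hbound w).1) (by obtain ⟨T, hT⟩ := htop; exact ⟨T, hT T le_rfl ▸ Submodule.mem_top⟩)
  · calc _ ≤ Real.exp d * (v * rayHerm s (fun i => jumpNum F (i.1 + 1)) t f) :=
          rayNorm_le_exp_mul_rayHerm hN₀ hadapt
            (fun i => by simpa [hon.1 i] using (hbound (s i)).2) (hexpand f)
      _ ≤ _ := by
          rw [Real.exp_add, mul_assoc]
          gcongr
          exacts [hHt f, Real.le_exp_log _]

/-- Comparison of the two ray constructions associated with a filtration:
`d_∞(H_t, N_t) ≤ d_∞(H₀, N₀) + log v`. -/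
theorem dInfty_rayHerm_rayNorm_le {V : Type*} [NormedAddCommGroup V]
    [InnerProductSpace ℂ V] [FiniteDimensional ℂ V]
    (v : ℕ) (hv : 1 ≤ v) (hdim : Module.finrank ℂ V = v)
    (F : ℝ → Submodule ℂ V)
    (hdec : ∀ t s' : ℝ, s' < t → F t ≤ F s')
    (hlc : ∀ t : ℝ, ∃ ε > 0, ∀ u : ℝ, t - ε < u → u ≤ t → F u = F t)
    (hbot : ∃ T : ℝ, ∀ t ≥ T, F t = ⊥) (htop : ∃ T : ℝ, ∀ t ≤ T, F t = ⊤)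
    (N₀ : V → ℝ) (hN₀ : IsCNorm N₀)
    (s : Fin v → V) (hon : Orthonormal ℂ s)
    (hadapt : ∀ i : Fin v, s i ∈ F (jumpNum F (i.1 + 1)))
    (t : ℝ) (ht : 0 ≤ t) :
    dInfty (rayHerm s (fun i => jumpNum F (i.1 + 1)) t) (rayNorm F N₀ t) ≤
      dInfty (fun w : V => ‖w‖) N₀ + Real.log v :=
  dInfty_rayHerm_rayNorm_le_general v hdim F hdec hlc hbot htop N₀ hN₀ s hon hadapt t ht
end
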